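/- Let H be a Hopf quasigroup over a field k. Every right H-Hopf module in the sense of Brzeziński — i.e., a right H-comodule (M, ρ_M) with a map φ_M: M ⊗ H → M satisfying φ_M(m ⊗ 1) = m, ρ_M(φ_M(m ⊗ x)) = φ_M(m_[0] ⊗ x_(1)) ⊗ m_[1]x_(2), φ_M(φ_M(m ⊗ x_(1)) ⊗ λ(x_(2))) = ε(x)m, and φ_M(φ_M(m ⊗ λ(x_(1))) ⊗ x_(2)) = ε(x)m — is isomorphic as a Hopf module to M^{coH} ⊗ H, where M^{coH} = {m : ρ_M(m) = m ⊗ 1}, via ω(n ⊗ x) = φ_M(n ⊗ x) with inverse ω⁻¹(m) = p_M(m_[0]) ⊗ m_[1], p_M(m) = φ_M(m_[0] ⊗ λ(m_[1])). Here M^{coH} ⊗ H carries action id ⊗ μ_H and coaction id ⊗ δ_H, and ω is bijective, H-colinear, and satisfies ω ∘ (id ⊗ μ_H) = φ_M^ω ∘ (ω ⊗ H) for the deformed action φ_M^ω. -/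
import Mathlib


open TensorProduct

noncomputable section

namespace DoiHopf

variable (k : Type) [Field k]
variable (H : Type) [AddCommGroup H] [Module k H]

/-- A Hopf quasigroup structure on `H`: a unital (not necessarily associative) magma and a
coassociative counital comonoid such that `eps` and `delta` are morphisms of unital magmas,
with an antipode `lam` satisfying the four Hopf quasigroup antipode identities. -/
structure IsHopfQuasigroup (mul : H ⊗[k] H →ₗ[k] H) (one : H)
    (eps : H →ₗ[k] k) (delta : H →ₗ[k] H ⊗[k] H) (lam : H →ₗ[k] H) : Prop where
  one_mul : ∀ x, mul (one ⊗ₜ[k] x) = x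
  mul_one : ∀ x, mul (x ⊗ₜ[k] one) = x
  coassoc : (TensorProduct.assoc k H H H).toLinearMap ∘ₗ delta.rTensor H ∘ₗ delta
      = delta.lTensor H ∘ₗ delta
  counit_left : ∀ x, (TensorProduct.lid k H) ((eps.rTensor H) (delta x)) = x
  counit_right : ∀ x, (TensorProduct.rid k H) ((eps.lTensor H) (delta x)) = x
  eps_mul : ∀ x y, eps (mul (x ⊗ₜ[k] y)) = eps x * eps y
  eps_one : eps one = 1
  delta_mul : delta ∘ₗ mul = (TensorProduct.map mul mul)
      ∘ₗ (TensorProduct.tensorTensorTensorComm k H H H H).toLinearMap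
      ∘ₗ (TensorProduct.map delta delta)
  delta_one : delta one = one ⊗ₜ[k] one
  antipode_left₁ : mul ∘ₗ (TensorProduct.map lam mul)
      ∘ₗ (TensorProduct.assoc k H H H).toLinearMap ∘ₗ delta.rTensor H
      = (TensorProduct.lid k H).toLinearMap ∘ₗ eps.rTensor H
  antipode_left₂ : mul ∘ₗ (TensorProduct.map (LinearMap.id : H →ₗ[k] H) (mul ∘ₗ lam.rTensor H))
      ∘ₗ (TensorProduct.assoc k H H H).toLinearMap ∘ₗ delta.rTensor H
      = (TensorProduct.lid k H).toLinearMap ∘ₗ eps.rTensor H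
  antipode_right₁ : mul ∘ₗ (TensorProduct.map mul lam)
      ∘ₗ (TensorProduct.assoc k H H H).symm.toLinearMap ∘ₗ delta.lTensor H
      = (TensorProduct.rid k H).toLinearMap ∘ₗ eps.lTensor H
  antipode_right₂ : mul ∘ₗ (TensorProduct.map (mul ∘ₗ lam.lTensor H) (LinearMap.id : H →ₗ[k] H))
      ∘ₗ (TensorProduct.assoc k H H H).symm.toLinearMap ∘ₗ delta.lTensor H
      = (TensorProduct.rid k H).toLinearMap ∘ₗ eps.lTensor H

/-- A right `H`-Hopf module in the sense of Brzeziński: a right `H`-comodule `(M, ρ_M)`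
with `φ_M : M ⊗ H → M` satisfying `φ_M(m ⊗ 1) = m`, the Hopf compatibility
`ρ_M(φ_M(m ⊗ x)) = φ_M(m₍₀₎ ⊗ x₍₁₎) ⊗ m₍₁₎x₍₂₎`, and the two cancellation laws
`φ_M(φ_M(m ⊗ x₍₁₎) ⊗ λ(x₍₂₎)) = ε(x)m` and `φ_M(φ_M(m ⊗ λ(x₍₁₎)) ⊗ x₍₂₎) = ε(x)m`. -/
structure IsHopfModule (mul : H ⊗[k] H →ₗ[k] H) (one : H)
    (eps : H →ₗ[k] k) (delta : H →ₗ[k] H ⊗[k] H) (lam : H →ₗ[k] H)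
    {M : Type} [AddCommGroup M] [Module k M]
    (phiM : M ⊗[k] H →ₗ[k] M) (rhoM : M →ₗ[k] M ⊗[k] H) : Prop where
  counit : ∀ m, (TensorProduct.rid k M) ((eps.lTensor M) (rhoM m)) = m
  coassoc : rhoM.rTensor H ∘ₗ rhoM
      = (TensorProduct.assoc k M H H).symm.toLinearMap ∘ₗ delta.lTensor M ∘ₗ rhoM
  act_one : ∀ m, phiM (m ⊗ₜ[k] one) = m
  compat : rhoM ∘ₗ phiM = (TensorProduct.map phiM mul)
      ∘ₗ (TensorProduct.tensorTensorTensorComm k M H H H).toLinearMap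
      ∘ₗ (TensorProduct.map rhoM delta)
  cancel₁ : phiM ∘ₗ (TensorProduct.map phiM lam)
      ∘ₗ (TensorProduct.assoc k M H H).symm.toLinearMap ∘ₗ delta.lTensor M
      = (TensorProduct.rid k M).toLinearMap ∘ₗ eps.lTensor M
  cancel₂ : phiM ∘ₗ (TensorProduct.map (phiM ∘ₗ lam.lTensor M) (LinearMap.id : H →ₗ[k] H))
      ∘ₗ (TensorProduct.assoc k M H H).symm.toLinearMap ∘ₗ delta.lTensor M
      = (TensorProduct.rid k M).toLinearMap ∘ₗ eps.lTensor M

/-- The coinvariant submodule `{m : ρ m = m ⊗ 1}`. -/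
def coinvSub {M : Type} [AddCommGroup M] [Module k M]
    (one : H) (rhoM : M →ₗ[k] M ⊗[k] H) : Submodule k M :=
  LinearMap.eqLocus rhoM ((TensorProduct.mk k M H).flip one)

section AuxTest
variable {k : Type} [Field k]
variable {H : Type} [AddCommGroup H] [Module k H]
variable {M : Type} [AddCommGroup M] [Module k M]
variable {mul : H ⊗[k] H →ₗ[k] H} {one : H} {eps : H →ₗ[k] k}
variable {delta : H →ₗ[k] H ⊗[k] H} {lam : H →ₗ[k] H}
variable {phiM : M ⊗[k] H →ₗ[k] M} {rhoM : M →ₗ[k] M ⊗[k] H}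
theorem hq_coassoc_apply (hH : IsHopfQuasigroup k H mul one eps delta lam) (x : H) :
    (TensorProduct.assoc k H H H) ((delta.rTensor H) (delta x)) = (delta.lTensor H) (delta x) := by
  simpa using LinearMap.congr_fun hH.coassoc x

theorem hq_coassoc_apply' (hH : IsHopfQuasigroup k H mul one eps delta lam) (x : H) :
    (delta.rTensor H) (delta x)
      = (TensorProduct.assoc k H H H).symm ((delta.lTensor H) (delta x)) := by
  rw [← hq_coassoc_apply hH x, LinearEquiv.symm_apply_apply]

theorem antipode_left_sum (hH : IsHopfQuasigroup k H mul one eps delta lam) (x y : H)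
    (s : Finset (H × H)) (hs : delta x = ∑ p ∈ s, p.1 ⊗ₜ[k] p.2) :
    ∑ p ∈ s, mul (lam p.1 ⊗ₜ[k] mul (p.2 ⊗ₜ[k] y)) = eps x • y := by
  have h := LinearMap.congr_fun hH.antipode_left₁ (x ⊗ₜ[k] y)
  simp only [LinearMap.coe_comp, Function.comp_apply, LinearEquiv.coe_coe,
    LinearMap.rTensor_tmul, TensorProduct.lid_tmul] at h
  rw [hs] at h
  simpa only [TensorProduct.sum_tmul, map_sum, TensorProduct.assoc_tmul,
    TensorProduct.map_tmul] using h

theorem antipode_right_one_sum (hH : IsHopfQuasigroup k H mul one eps delta lam) (x : H)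
    (s : Finset (H × H)) (hs : delta x = ∑ p ∈ s, p.1 ⊗ₜ[k] p.2) :
    ∑ p ∈ s, mul (p.1 ⊗ₜ[k] lam p.2) = eps x • one := by
  have h := LinearMap.congr_fun hH.antipode_right₁ (one ⊗ₜ[k] x)
  simp only [LinearMap.coe_comp, Function.comp_apply, LinearEquiv.coe_coe,
    LinearMap.lTensor_tmul, TensorProduct.rid_tmul] at h
  rw [hs] at h
  simpa only [TensorProduct.tmul_sum, map_sum, TensorProduct.assoc_symm_tmul,
    TensorProduct.map_tmul, hH.one_mul] using h

theorem counit_right_sum (hH : IsHopfQuasigroup k H mul one eps delta lam) (x : H)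
    (s : Finset (H × H)) (hs : delta x = ∑ p ∈ s, p.1 ⊗ₜ[k] p.2) :
    ∑ p ∈ s, eps p.2 • p.1 = x := by
  have h := hH.counit_right x
  rw [hs] at h
  simpa only [map_sum, LinearMap.lTensor_tmul, TensorProduct.rid_tmul] using h

theorem counit_left_sum (hH : IsHopfQuasigroup k H mul one eps delta lam) (x : H)
    (s : Finset (H × H)) (hs : delta x = ∑ p ∈ s, p.1 ⊗ₜ[k] p.2) :
    ∑ p ∈ s, eps p.1 • p.2 = x := by
  have h := hH.counit_left x
  rw [hs] at h
  simpa only [map_sum, LinearMap.rTensor_tmul, TensorProduct.lid_tmul] using h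

/-- Componentwise multiplication on `H ⊗ H`. -/
def muK (mul : H ⊗[k] H →ₗ[k] H) :
    ((H ⊗[k] H) ⊗[k] (H ⊗[k] H)) →ₗ[k] H ⊗[k] H :=
  TensorProduct.map mul mul ∘ₗ (TensorProduct.tensorTensorTensorComm k H H H H).toLinearMap

@[simp] theorem muK_tmul (mul : H ⊗[k] H →ₗ[k] H) (a b c d : H) :
    muK mul ((a ⊗ₜ[k] b) ⊗ₜ[k] (c ⊗ₜ[k] d)) = mul (a ⊗ₜ[k] c) ⊗ₜ[k] mul (b ⊗ₜ[k] d) := by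
  simp [muK]

/-- The candidate for `δ ∘ λ`, namely `(λ ⊗ λ) ∘ τ ∘ δ`. -/
def Tq (delta : H →ₗ[k] H ⊗[k] H) (lam : H →ₗ[k] H) : H →ₗ[k] H ⊗[k] H :=
  TensorProduct.map lam lam ∘ₗ (TensorProduct.comm k H H).toLinearMap ∘ₗ delta

theorem Tq_apply (delta : H →ₗ[k] H ⊗[k] H) (lam : H →ₗ[k] H) (x : H) :
    Tq delta lam x
      = TensorProduct.map lam lam ((TensorProduct.comm k H H) (delta x)) := rfl

theorem muK_one (hH : IsHopfQuasigroup k H mul one eps delta lam)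
    (z : H ⊗[k] H) : muK mul (z ⊗ₜ[k] (one ⊗ₜ[k] one)) = z := by
  induction z using TensorProduct.induction_on with
  | zero => simp
  | tmul a b => simp [hH.mul_one]
  | add z₁ z₂ h₁ h₂ => rw [TensorProduct.add_tmul, map_add, h₁, h₂]

theorem genB' (hH : IsHopfQuasigroup k H mul one eps delta lam) (x : H) (Y : H ⊗[k] H) :
    muK mul ((TensorProduct.map (Tq delta lam) (muK mul))
      ((TensorProduct.assoc k H (H ⊗[k] H) (H ⊗[k] H))
        ((delta.lTensor H (delta x)) ⊗ₜ[k] Y))) = eps x • Y := by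
  induction Y using TensorProduct.induction_on with
  | zero => simp
  | add Y₁ Y₂ h₁ h₂ => rw [TensorProduct.tmul_add, map_add, map_add, map_add, h₁, h₂, smul_add]
  | tmul y z =>
    choose D hD using fun a : H => TensorProduct.exists_finset (delta a)
    rw [← hq_coassoc_apply hH x, hD x]
    simp only [map_sum, TensorProduct.sum_tmul, LinearMap.rTensor_tmul]
    -- expand delta p.1 for each p
    have expand1 : ∀ p : H × H,
        muK mul ((TensorProduct.map (Tq delta lam) (muK mul))
          ((TensorProduct.assoc k H (H ⊗[k] H) (H ⊗[k] H))
            (((TensorProduct.assoc k H H H) ((delta p.1) ⊗ₜ[k] p.2)) ⊗ₜ[k] (y ⊗ₜ[k] z))))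
          = y ⊗ₜ[k] mul (lam p.1 ⊗ₜ[k] mul (p.2 ⊗ₜ[k] z)) := by
      intro p
      rw [hD p.1]
      simp only [TensorProduct.sum_tmul, map_sum, TensorProduct.assoc_tmul,
        TensorProduct.map_tmul, muK_tmul]
      -- now: ∑ q ∈ D p.1, muK mul (Tq delta lam q.1 ⊗ₜ (mul (q.2 ⊗ₜ y) ⊗ₜ mul (p.2 ⊗ₜ z)))
      --      = y ⊗ₜ mul (lam p.1 ⊗ₜ mul (p.2 ⊗ₜ z))
      set C := mul (p.2 ⊗ₜ[k] z) with hC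
      -- the collapsing linear map χ
      set χ : ((H ⊗[k] H) ⊗[k] H) →ₗ[k] H ⊗[k] H :=
        muK mul ∘ₗ TensorProduct.map
          (TensorProduct.map lam lam ∘ₗ (TensorProduct.comm k H H).toLinearMap)
          (((TensorProduct.mk k H H).flip C) ∘ₗ (mul ∘ₗ (TensorProduct.mk k H H).flip y))
        with hχ
      have hχtmul : ∀ (e f v : H), χ ((e ⊗ₜ[k] f) ⊗ₜ[k] v)
          = mul (lam f ⊗ₜ[k] mul (v ⊗ₜ[k] y)) ⊗ₜ[k] mul (lam e ⊗ₜ[k] C) := by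
        intro e f v
        simp [hχ, TensorProduct.map_tmul]
      have key : (∑ q ∈ D p.1,
          muK mul (Tq delta lam q.1 ⊗ₜ[k] (mul (q.2 ⊗ₜ[k] y) ⊗ₜ[k] C)))
          = χ ((delta.rTensor H) (delta p.1)) := by
        rw [hD p.1]
        simp only [map_sum, LinearMap.rTensor_tmul]
        refine Finset.sum_congr rfl fun q _ => ?_
        simp [hχ, Tq, TensorProduct.map_tmul]
      rw [key, hq_coassoc_apply' hH p.1, hD p.1]
      simp only [map_sum, LinearMap.lTensor_tmul]
      have expandq : ∀ q : H × H,
          χ ((TensorProduct.assoc k H H H).symm (q.1 ⊗ₜ[k] delta q.2))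
            = eps q.2 • (y ⊗ₜ[k] mul (lam q.1 ⊗ₜ[k] C)) := by
        intro q
        rw [hD q.2]
        simp only [TensorProduct.tmul_sum, map_sum, TensorProduct.assoc_symm_tmul, hχtmul]
        rw [← TensorProduct.sum_tmul, antipode_left_sum hH q.2 y (D q.2) (hD q.2),
          TensorProduct.smul_tmul']
      simp only [expandq]
      have hc := counit_right_sum hH p.1 (D p.1) (hD p.1)
      calc ∑ q ∈ D p.1, eps q.2 • (y ⊗ₜ[k] mul (lam q.1 ⊗ₜ[k] C))
          = y ⊗ₜ[k] mul (lam (∑ q ∈ D p.1, eps q.2 • q.1) ⊗ₜ[k] C) := by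
            simp only [map_sum, map_smul, TensorProduct.sum_tmul, TensorProduct.tmul_sum,
              ← TensorProduct.smul_tmul', TensorProduct.tmul_smul]
        _ = y ⊗ₜ[k] mul (lam p.1 ⊗ₜ[k] C) := by rw [hc]
    simp only [expand1]
    rw [← TensorProduct.tmul_sum, antipode_left_sum hH x z (D x) (hD x),
      TensorProduct.tmul_smul]

/-- The antipode of a Hopf quasigroup is anticomultiplicative. -/
theorem delta_lam (hH : IsHopfQuasigroup k H mul one eps delta lam) (h : H) :
    delta (lam h) = Tq delta lam h := by
  choose D hD using fun a : H => TensorProduct.exists_finset (delta a)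
  have dmul : ∀ t : H ⊗[k] H, delta (mul t) = muK mul (TensorProduct.map delta delta t) := by
    intro t
    simpa [muK] using LinearMap.congr_fun hH.delta_mul t
  have hone : ∀ b : H, (eps b • one) = mul (lam.lTensor H (delta b)) := by
    intro b
    rw [hD b]; simp only [map_sum, LinearMap.lTensor_tmul]
    exact (antipode_right_one_sum hH b (D b) (hD b)).symm
  set Φ : H ⊗[k] (H ⊗[k] H) →ₗ[k] H ⊗[k] H :=
    muK mul ∘ₗ TensorProduct.map (Tq delta lam)
      (muK mul ∘ₗ TensorProduct.map delta delta ∘ₗ lam.lTensor H) with hΦ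
  have step1 : Tq delta lam h = Φ ((delta.lTensor H) (delta h)) := by
    conv_lhs => rw [← counit_right_sum hH h (D h) (hD h)]
    rw [hD h]
    simp only [map_sum, map_smul, LinearMap.lTensor_tmul]
    refine Finset.sum_congr rfl fun p _ => ?_
    rw [hΦ]
    simp only [LinearMap.coe_comp, Function.comp_apply, TensorProduct.map_tmul,
      LinearMap.lTensor_tmul]
    rw [← dmul (lam.lTensor H (delta p.2)), ← hone p.2, map_smul, hH.delta_one,
      TensorProduct.tmul_smul, map_smul, muK_one hH]
  have claim : ∀ a b : H, Φ ((TensorProduct.assoc k H H H) (delta a ⊗ₜ[k] b))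
      = eps a • delta (lam b) := by
    intro a b
    have g := genB' hH a (delta (lam b))
    rw [hD a] at g ⊢
    simp only [TensorProduct.sum_tmul, map_sum, TensorProduct.assoc_tmul, hΦ,
      LinearMap.coe_comp, Function.comp_apply, TensorProduct.map_tmul,
      LinearMap.lTensor_tmul] at g ⊢
    exact g
  rw [step1, ← hq_coassoc_apply hH h, hD h]
  simp only [map_sum, LinearMap.rTensor_tmul, claim]
  conv_lhs => rw [← counit_left_sum hH h (D h) (hD h)]
  simp only [map_sum, map_smul]

theorem compat_apply (hM : IsHopfModule k H mul one eps delta lam phiM rhoM) (m : M) (x : H) :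
    rhoM (phiM (m ⊗ₜ[k] x)) = (TensorProduct.map phiM mul)
      ((TensorProduct.tensorTensorTensorComm k M H H H) (rhoM m ⊗ₜ[k] delta x)) := by
  simpa using LinearMap.congr_fun hM.compat (m ⊗ₜ[k] x)

theorem com_coassoc_apply (hM : IsHopfModule k H mul one eps delta lam phiM rhoM) (m : M) :
    (delta.lTensor M) (rhoM m)
      = (TensorProduct.assoc k M H H) ((rhoM.rTensor H) (rhoM m)) := by
  have h := LinearMap.congr_fun hM.coassoc m
  simp only [LinearMap.coe_comp, Function.comp_apply, LinearEquiv.coe_coe] at h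
  rw [h, LinearEquiv.apply_symm_apply]

theorem com_coassoc_apply' (hM : IsHopfModule k H mul one eps delta lam phiM rhoM) (m : M) :
    (rhoM.rTensor H) (rhoM m)
      = (TensorProduct.assoc k M H H).symm ((delta.lTensor M) (rhoM m)) := by
  have h := LinearMap.congr_fun hM.coassoc m
  simpa only [LinearMap.coe_comp, Function.comp_apply, LinearEquiv.coe_coe] using h

theorem com_counit_sum (hM : IsHopfModule k H mul one eps delta lam phiM rhoM) (m : M)
    (s : Finset (M × H)) (hs : rhoM m = ∑ p ∈ s, p.1 ⊗ₜ[k] p.2) :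
    ∑ p ∈ s, eps p.2 • p.1 = m := by
  have h := hM.counit m
  rw [hs] at h
  simpa only [map_sum, LinearMap.lTensor_tmul, TensorProduct.rid_tmul] using h

/-- `p_M(m) = φ(m₀ ⊗ λ(m₁))` is coinvariant. -/
theorem pm_coinv (hH : IsHopfQuasigroup k H mul one eps delta lam)
    (hM : IsHopfModule k H mul one eps delta lam phiM rhoM) (m : M) :
    rhoM (phiM (lam.lTensor M (rhoM m)))
      = phiM (lam.lTensor M (rhoM m)) ⊗ₜ[k] one := by
  choose D hD using fun a : H => TensorProduct.exists_finset (delta a)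
  choose DM hDM using fun m' : M => TensorProduct.exists_finset (rhoM m')
  set Θ : ((M ⊗[k] H) ⊗[k] (H ⊗[k] H)) →ₗ[k] M ⊗[k] H :=
    TensorProduct.map phiM mul ∘ₗ (TensorProduct.tensorTensorTensorComm k M H H H).toLinearMap
      ∘ₗ (TensorProduct.map lam lam
          ∘ₗ (TensorProduct.comm k H H).toLinearMap).lTensor (M ⊗[k] H) with hΘ
  have lhs1 : rhoM (phiM (lam.lTensor M (rhoM m)))
      = Θ ((rhoM.rTensor (H ⊗[k] H)) ((delta.lTensor M) (rhoM m))) := by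
    conv_lhs => rw [hDM m]
    conv_rhs => rw [hDM m]
    simp only [map_sum, LinearMap.lTensor_tmul, LinearMap.rTensor_tmul]
    refine Finset.sum_congr rfl fun i _ => ?_
    rw [compat_apply hM i.1 (lam i.2), delta_lam hH i.2, hΘ]
    simp only [LinearMap.coe_comp, Function.comp_apply, LinearMap.lTensor_tmul, Tq_apply,
      LinearEquiv.coe_coe]
  have per_i : ∀ i : M × H,
      Θ ((rhoM.rTensor (H ⊗[k] H))
        ((TensorProduct.assoc k M H H) ((rhoM i.1) ⊗ₜ[k] i.2)))
        = phiM (i.1 ⊗ₜ[k] lam i.2) ⊗ₜ[k] one := by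
    intro i
    set Gi : ((M ⊗[k] H) ⊗[k] H) →ₗ[k] M ⊗[k] H :=
      Θ ∘ₗ (((TensorProduct.mk k H H).flip i.2).lTensor (M ⊗[k] H)) with hGi
    have fold : Θ ((rhoM.rTensor (H ⊗[k] H))
        ((TensorProduct.assoc k M H H) ((rhoM i.1) ⊗ₜ[k] i.2)))
        = Gi ((rhoM.rTensor H) (rhoM i.1)) := by
      conv_lhs => rw [hDM i.1]
      conv_rhs => rw [hDM i.1]
      simp only [TensorProduct.sum_tmul, map_sum, TensorProduct.assoc_tmul,
        LinearMap.rTensor_tmul, hGi, LinearMap.coe_comp, Function.comp_apply,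
        LinearMap.lTensor_tmul, LinearMap.flip_apply, TensorProduct.mk_apply]
    rw [fold, com_coassoc_apply' hM i.1, hDM i.1]
    simp only [map_sum, LinearMap.lTensor_tmul]
    have inner : ∀ j : M × H,
        Gi ((TensorProduct.assoc k M H H).symm (j.1 ⊗ₜ[k] delta j.2))
          = eps j.2 • (phiM (j.1 ⊗ₜ[k] lam i.2) ⊗ₜ[k] one) := by
      intro j
      rw [hD j.2]
      simp only [TensorProduct.tmul_sum, map_sum, TensorProduct.assoc_symm_tmul, hGi, hΘ,
        LinearMap.coe_comp, Function.comp_apply, LinearMap.lTensor_tmul,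
        LinearMap.flip_apply, TensorProduct.mk_apply, LinearEquiv.coe_coe,
        TensorProduct.comm_tmul, TensorProduct.map_tmul,
        TensorProduct.tensorTensorTensorComm_tmul]
      rw [← TensorProduct.tmul_sum, antipode_right_one_sum hH j.2 (D j.2) (hD j.2),
        TensorProduct.tmul_smul]
    simp only [inner]
    have hrepr : ∀ u : M, phiM (u ⊗ₜ[k] lam i.2) ⊗ₜ[k] one
        = ((TensorProduct.mk k M H).flip one ∘ₗ phiM
            ∘ₗ (TensorProduct.mk k M H).flip (lam i.2)) u := by
      intro u; simp
    simp only [hrepr]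
    conv_rhs => rw [← com_counit_sum hM i.1 (DM i.1) (hDM i.1)]
    simp only [map_sum, map_smul]
  rw [lhs1, com_coassoc_apply hM m]
  conv_lhs => rw [hDM m]
  conv_rhs => rw [hDM m]
  simp only [map_sum, LinearMap.rTensor_tmul, LinearMap.lTensor_tmul, per_i,
    TensorProduct.sum_tmul]
end AuxTest

theorem fundamental_theorem_hopf_quasigroup'
    {k : Type} [Field k] {H : Type} [AddCommGroup H] [Module k H]
    {mul : H ⊗[k] H →ₗ[k] H} {one : H} {eps : H →ₗ[k] k}
    {delta : H →ₗ[k] H ⊗[k] H} {lam : H →ₗ[k] H}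
    {M : Type} [AddCommGroup M] [Module k M]
    {phiM : M ⊗[k] H →ₗ[k] M} {rhoM : M →ₗ[k] M ⊗[k] H}
    (hH : IsHopfQuasigroup k H mul one eps delta lam)
    (hM : IsHopfModule k H mul one eps delta lam phiM rhoM) :
    ∃ hp : ∀ m : M, (phiM ∘ₗ lam.lTensor M ∘ₗ rhoM) m ∈ coinvSub k H one rhoM,
      Function.Bijective (phiM ∘ₗ (coinvSub k H one rhoM).subtype.rTensor H) ∧
      (rhoM ∘ₗ (phiM ∘ₗ (coinvSub k H one rhoM).subtype.rTensor H)
        = (phiM ∘ₗ (coinvSub k H one rhoM).subtype.rTensor H).rTensor H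
            ∘ₗ (TensorProduct.assoc k (coinvSub k H one rhoM) H H).symm.toLinearMap
            ∘ₗ delta.lTensor (coinvSub k H one rhoM)) ∧
      (∀ m : M, (phiM ∘ₗ (coinvSub k H one rhoM).subtype.rTensor H)
          ((((phiM ∘ₗ lam.lTensor M ∘ₗ rhoM).codRestrict
              (coinvSub k H one rhoM) hp).rTensor H) (rhoM m)) = m) ∧
      (∀ t : (coinvSub k H one rhoM) ⊗[k] H,
          (((phiM ∘ₗ lam.lTensor M ∘ₗ rhoM).codRestrict
              (coinvSub k H one rhoM) hp).rTensor H)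
            (rhoM ((phiM ∘ₗ (coinvSub k H one rhoM).subtype.rTensor H) t)) = t) := by
  choose D hD using fun a : H => TensorProduct.exists_finset (delta a)
  choose DM hDM using fun m' : M => TensorProduct.exists_finset (rhoM m')
  have hp : ∀ m : M, (phiM ∘ₗ lam.lTensor M ∘ₗ rhoM) m ∈ coinvSub k H one rhoM := by
    intro m
    simp only [coinvSub, LinearMap.mem_eqLocus, LinearMap.coe_comp, Function.comp_apply,
      LinearMap.flip_apply, TensorProduct.mk_apply]
    exact pm_coinv hH hM m
  set N := coinvSub k H one rhoM with hN
  -- colinearity of ω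
  have colin : rhoM ∘ₗ (phiM ∘ₗ N.subtype.rTensor H)
      = (phiM ∘ₗ N.subtype.rTensor H).rTensor H
          ∘ₗ (TensorProduct.assoc k N H H).symm.toLinearMap ∘ₗ delta.lTensor N := by
    apply TensorProduct.ext'
    intro n x
    have hn : rhoM (n : M) = (n : M) ⊗ₜ[k] one := by
      have h := n.2
      simp only [hN, coinvSub, LinearMap.mem_eqLocus, LinearMap.flip_apply,
        TensorProduct.mk_apply] at h
      exact h
    simp only [LinearMap.coe_comp, Function.comp_apply, LinearMap.rTensor_tmul,
      Submodule.coe_subtype, LinearEquiv.coe_coe, LinearMap.lTensor_tmul]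
    rw [compat_apply hM (n : M) x, hn, hD x]
    simp only [TensorProduct.tmul_sum, map_sum, TensorProduct.tensorTensorTensorComm_tmul,
      TensorProduct.map_tmul, hH.one_mul, TensorProduct.assoc_symm_tmul,
      LinearMap.rTensor_tmul, LinearMap.coe_comp, Function.comp_apply,
      Submodule.coe_subtype]
  have hcomp : N.subtype.rTensor H
      ∘ₗ ((phiM ∘ₗ lam.lTensor M ∘ₗ rhoM).codRestrict N hp).rTensor H
      = (phiM ∘ₗ lam.lTensor M ∘ₗ rhoM).rTensor H := by
    rw [← LinearMap.rTensor_comp, LinearMap.subtype_comp_codRestrict]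
  have bullet3 : ∀ m : M, (phiM ∘ₗ N.subtype.rTensor H)
      ((((phiM ∘ₗ lam.lTensor M ∘ₗ rhoM).codRestrict N hp).rTensor H) (rhoM m)) = m := by
    intro m
    have h2 := LinearMap.congr_fun hcomp (rhoM m)
    simp only [LinearMap.coe_comp, Function.comp_apply] at h2 ⊢
    rw [h2]
    have key := LinearMap.congr_fun hM.cancel₂ (rhoM m)
    simp only [LinearMap.coe_comp, Function.comp_apply, LinearEquiv.coe_coe] at key
    rw [com_coassoc_apply hM m] at key
    simp only [LinearEquiv.symm_apply_apply] at key
    rw [hM.counit m] at key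
    conv_rhs => rw [← key]
    congr 1
    conv_lhs => rw [hDM m]
    conv_rhs => rw [hDM m]
    simp only [map_sum, LinearMap.rTensor_tmul, TensorProduct.map_tmul,
      LinearMap.coe_comp, Function.comp_apply, LinearMap.id_coe, id_eq]
  -- injectivity of the inclusion tensored with H
  have hinj : Function.Injective (N.subtype.rTensor H) :=
    Module.Flat.rTensor_preserves_injective_linearMap (M := H) N.subtype
      (Submodule.injective_subtype N)
  have qcoinv : ∀ (n : N) (a : H),
      (phiM ∘ₗ lam.lTensor M ∘ₗ rhoM) (phiM ((n : M) ⊗ₜ[k] a)) = eps a • (n : M) := by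
    intro n a
    have hcol := LinearMap.congr_fun colin ((n : N) ⊗ₜ[k] a)
    simp only [LinearMap.coe_comp, Function.comp_apply, LinearEquiv.coe_coe,
      LinearMap.lTensor_tmul, LinearMap.rTensor_tmul, Submodule.coe_subtype] at hcol ⊢
    rw [hcol, hD a]
    have key1 := LinearMap.congr_fun hM.cancel₁ ((n : M) ⊗ₜ[k] a)
    simp only [LinearMap.coe_comp, Function.comp_apply, LinearEquiv.coe_coe,
      LinearMap.lTensor_tmul, TensorProduct.rid_tmul] at key1
    rw [hD a] at key1
    simp only [TensorProduct.tmul_sum, map_sum, TensorProduct.assoc_symm_tmul,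
      TensorProduct.map_tmul, LinearMap.rTensor_tmul, LinearMap.coe_comp,
      Function.comp_apply, Submodule.coe_subtype, LinearMap.lTensor_tmul] at key1 ⊢
    exact key1
  have bullet4 : ∀ t : N ⊗[k] H,
      ((((phiM ∘ₗ lam.lTensor M ∘ₗ rhoM).codRestrict N hp).rTensor H)
        (rhoM ((phiM ∘ₗ N.subtype.rTensor H) t))) = t := by
    intro t
    apply hinj
    have h2 := LinearMap.congr_fun hcomp (rhoM ((phiM ∘ₗ N.subtype.rTensor H) t))
    simp only [LinearMap.coe_comp, Function.comp_apply] at h2 ⊢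
    rw [h2]
    clear h2
    induction t using TensorProduct.induction_on with
    | zero => simp
    | add t₁ t₂ h₁ h₂ => simp only [map_add, h₁, h₂]
    | tmul n x =>
      simp only [LinearMap.rTensor_tmul, Submodule.coe_subtype]
      have hcol := LinearMap.congr_fun colin ((n : N) ⊗ₜ[k] x)
      simp only [LinearMap.coe_comp, Function.comp_apply, LinearEquiv.coe_coe,
        LinearMap.lTensor_tmul, LinearMap.rTensor_tmul, Submodule.coe_subtype] at hcol
      rw [hcol, hD x]
      simp only [TensorProduct.tmul_sum, map_sum, TensorProduct.assoc_symm_tmul,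
        LinearMap.rTensor_tmul, LinearMap.coe_comp, Function.comp_apply,
        Submodule.coe_subtype, LinearMap.lTensor_tmul]
      have : ∀ p : H × H, (phiM ∘ₗ lam.lTensor M ∘ₗ rhoM) (phiM ((n : M) ⊗ₜ[k] p.1)) ⊗ₜ[k] p.2
          = (eps p.1 • (n : M)) ⊗ₜ[k] p.2 := by
        intro p
        rw [qcoinv n p.1]
      simp only [LinearMap.coe_comp, Function.comp_apply] at this
      simp only [this]
      conv_rhs => rw [← counit_left_sum hH x (D x) (hD x)]
      simp only [TensorProduct.tmul_sum, TensorProduct.tmul_smul, TensorProduct.smul_tmul']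
  refine ⟨hp, ⟨Function.LeftInverse.injective
      (g := fun v => (((phiM ∘ₗ lam.lTensor M ∘ₗ rhoM).codRestrict N hp).rTensor H) (rhoM v))
      fun t => bullet4 t,
    fun m => ⟨(((phiM ∘ₗ lam.lTensor M ∘ₗ rhoM).codRestrict N hp).rTensor H) (rhoM m),
      bullet3 m⟩⟩, colin, bullet3, bullet4⟩

variable (mul : H ⊗[k] H →ₗ[k] H) (one : H) (eps : H →ₗ[k] k)
variable (delta : H →ₗ[k] H ⊗[k] H) (lam : H →ₗ[k] H)

variable (M : Type) [AddCommGroup M] [Module k M]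
variable (phiM : M ⊗[k] H →ₗ[k] M) (rhoM : M →ₗ[k] M ⊗[k] H)

/-- Fundamental theorem of Hopf modules for a Hopf quasigroup (Brzeziński): every right
`H`-Hopf module `M` is isomorphic to `M^{coH} ⊗ H` via `ω(n ⊗ x) = φ_M(n ⊗ x)`, whose
inverse is `m ↦ p_M(m₍₀₎) ⊗ m₍₁₎` with `p_M(m) = φ_M(m₍₀₎ ⊗ λ(m₍₁₎))`; moreover `ω` is
bijective and `H`-colinear for the coaction `id ⊗ δ` on `M^{coH} ⊗ H`. -/
theorem fundamental_theorem_hopf_quasigroup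
    (hH : IsHopfQuasigroup k H mul one eps delta lam)
    (hM : IsHopfModule k H mul one eps delta lam phiM rhoM) :
    ∃ hp : ∀ m : M, (phiM ∘ₗ lam.lTensor M ∘ₗ rhoM) m ∈ coinvSub k H one rhoM,
      Function.Bijective (phiM ∘ₗ (coinvSub k H one rhoM).subtype.rTensor H) ∧
      (rhoM ∘ₗ (phiM ∘ₗ (coinvSub k H one rhoM).subtype.rTensor H)
        = (phiM ∘ₗ (coinvSub k H one rhoM).subtype.rTensor H).rTensor H
            ∘ₗ (TensorProduct.assoc k (coinvSub k H one rhoM) H H).symm.toLinearMap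
            ∘ₗ delta.lTensor (coinvSub k H one rhoM)) ∧
      (∀ m : M, (phiM ∘ₗ (coinvSub k H one rhoM).subtype.rTensor H)
          ((((phiM ∘ₗ lam.lTensor M ∘ₗ rhoM).codRestrict
              (coinvSub k H one rhoM) hp).rTensor H) (rhoM m)) = m) ∧
      (∀ t : (coinvSub k H one rhoM) ⊗[k] H,
          (((phiM ∘ₗ lam.lTensor M ∘ₗ rhoM).codRestrict
              (coinvSub k H one rhoM) hp).rTensor H)
            (rhoM ((phiM ∘ₗ (coinvSub k H one rhoM).subtype.rTensor H) t)) = t) :=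
  fundamental_theorem_hopf_quasigroup' hH hM
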